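/- arXiv:math/0702141 — 2 statements merged into one kernel-verified Lean document; each statement's English description precedes it below -/
import Mathlib

section
/- Let E be a hermitian vector bundle of rank N over Spec(O_F) (a projective O_F-module with conjugation-invariant hermitian metrics h_σ at each complex embedding σ). For every k ≤ N, the sum of the k-th logarithmic successive minimum of E and the (N+1-k)-th logarithmic successive minimum of the dual bundle E* is nonnegative: 0 ≤ μ_k(Ē) + μ_{N+1-k}(Ē*). -/
open NumberField

/-- The `j`-th logarithmic successive minimum of a hermitian `𝓞 F`-lattice: the
infimum of the `μ ∈ ℝ` such that there exist `j` vectors, `F`-linearly independent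
(equivalently `𝓞 F`-linearly independent), all of whose archimedean norms are
at most `exp μ`. -/
noncomputable def sucMin (F : Type*) [Field F] [NumberField F] (E : Type*)
    [AddCommGroup E] [Module (RingOfIntegers F) E]
    (nrm : (F →+* ℂ) → E → ℝ) (j : ℕ) : ℝ :=
  sInf {μ : ℝ | ∃ e : Fin j → E, LinearIndependent (RingOfIntegers F) e ∧
    ∀ i σ, nrm σ (e i) ≤ Real.exp μ}

/-!
If `e₁, …, e_k` are independent vectors of `E` with all norms `≤ exp μ` and `u₁, …, u_{N+1-k}`
are independent forms of `E*` with all norms `≤ exp ν`, then, since `k + (N + 1 - k) > N`, a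
dimension count over the fraction field `F` shows that some `u_j (e_i)` is a nonzero algebraic
integer. It has a conjugate `σ (u_j (e_i))` of absolute value `≥ 1`, while
`|σ (u_j (e_i))| ≤ ‖u_j‖_σ ‖e_i‖_σ ≤ exp (μ + ν)`; hence `μ + ν ≥ 0`.
-/

open Module
open scoped TensorProduct nonZeroDivisors

theorem exists_dual_apply_ne_zero_of_finrank_lt {K W : Type*} [Field K] [AddCommGroup W]
    [Module K W] [FiniteDimensional K W] {k m : ℕ} (hkm : finrank K W < k + m)
    {e : Fin k → W} (he : LinearIndependent K e)
    {u : Fin m → Dual K W} (hu : LinearIndependent K u) :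
    ∃ i j, u j (e i) ≠ 0 := by
  by_contra! h
  set U := Submodule.span K (Set.range e)
  have hu_le : Submodule.span K (Set.range u) ≤ U.dualAnnihilator := by
    rw [Submodule.span_le, Submodule.coe_dualAnnihilator_span]
    rintro _ ⟨j, rfl⟩ _ ⟨i, rfl⟩
    exact h i j
  have hm := Submodule.finrank_mono hu_le
  have hk := Subspace.finrank_add_finrank_dualAnnihilator_eq U
  rw [finrank_span_eq_card hu, Fintype.card_fin] at hm
  rw [finrank_span_eq_card he, Fintype.card_fin] at hk
  omega

section FractionRing

variable (R E : Type*) [CommRing R] [AddCommGroup E] [Module R E]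

noncomputable abbrev Module.Dual.baseChangeFractionRing :
    Dual R E →ₗ[R] Dual (FractionRing R) (FractionRing R ⊗[R] E) :=
  IsLocalizedModule.mapExtendScalars R⁰ (TensorProduct.mk R (FractionRing R) E 1)
    (Algebra.linearMap R (FractionRing R)) (FractionRing R)

variable {R E}

theorem Module.Dual.baseChangeFractionRing_apply_tmul (u : Dual R E) (x : E) :
    Dual.baseChangeFractionRing R E u (1 ⊗ₜ x) = algebraMap R (FractionRing R) (u x) :=
  IsLocalizedModule.map_apply R⁰ (TensorProduct.mk R (FractionRing R) E 1)
    (Algebra.linearMap R (FractionRing R)) u x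

variable [IsDomain R] [FinitePresentation R E]

theorem Module.finrank_dual_of_isDomain : finrank R (Dual R E) = finrank R E := by
  rw [← ((isLocalizedModule_iff_isBaseChange R⁰ (FractionRing R)
      (Dual.baseChangeFractionRing R E)).mp inferInstance).finrank_eq,
    Subspace.dual_finrank_eq, (TensorProduct.isBaseChange R E (FractionRing R)).finrank_eq]

theorem exists_dual_apply_ne_zero_of_finrank_lt_of_isDomain {k m : ℕ}
    (hkm : finrank R E < k + m) {e : Fin k → E} (he : LinearIndependent R e)
    {u : Fin m → Dual R E} (hu : LinearIndependent R u) :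
    ∃ i j, u j (e i) ≠ 0 := by
  have : FiniteDimensional (FractionRing R) (FractionRing R ⊗[R] E) :=
    Module.Finite.base_change _ _ _
  obtain ⟨i, j, hij⟩ := exists_dual_apply_ne_zero_of_finrank_lt
    (by rwa [(TensorProduct.isBaseChange R E (FractionRing R)).finrank_eq])
    (he.of_isLocalizedModule (FractionRing R) R⁰ (TensorProduct.mk R (FractionRing R) E 1))
    (hu.of_isLocalizedModule (FractionRing R) R⁰ (Dual.baseChangeFractionRing R E))
  refine ⟨i, j, fun h ↦ hij ?_⟩
  simpa [h] using Dual.baseChangeFractionRing_apply_tmul (u j) (e i)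

end FractionRing

theorem zero_le_csInf_add_csInf {A B : Set ℝ} (hA : A.Nonempty) (hB : B.Nonempty)
    (h : ∀ a ∈ A, ∀ b ∈ B, 0 ≤ a + b) : 0 ≤ sInf A + sInf B := by
  have : -sInf B ≤ sInf A :=
    le_csInf hA fun a ha ↦ neg_le.mp (le_csInf hB fun b hb ↦ by linarith [h a ha b hb])
  linarith

section SuccessiveMinima

variable {F : Type*} [Field F] [NumberField F] {E : Type*} [AddCommGroup E] [Module (𝓞 F) E]

theorem nonempty_sucMin_set {nrm : (F →+* ℂ) → E → ℝ} {j : ℕ} {e : Fin j → E}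
    (he : LinearIndependent (𝓞 F) e) :
    {μ : ℝ | ∃ e : Fin j → E, LinearIndependent (𝓞 F) e ∧
      ∀ i σ, nrm σ (e i) ≤ Real.exp μ}.Nonempty := by
  obtain ⟨C, hC⟩ := (Set.finite_range fun p : Fin j × (F →+* ℂ) ↦ nrm p.2 (e p.1)).bddAbove
  refine ⟨C, e, he, fun i σ ↦ ?_⟩
  linarith [hC ⟨(i, σ), rfl⟩, Real.add_one_le_exp C]

theorem zero_le_sucMin_add_sucMin {E' : Type*} [AddCommGroup E'] [Module (𝓞 F) E']
    {nrm : (F →+* ℂ) → E → ℝ} {nrm' : (F →+* ℂ) → E' → ℝ} {j j' : ℕ}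
    (he : ∃ e : Fin j → E, LinearIndependent (𝓞 F) e)
    (he' : ∃ e' : Fin j' → E', LinearIndependent (𝓞 F) e')
    (h : ∀ (e : Fin j → E) (e' : Fin j' → E') (μ ν : ℝ),
      LinearIndependent (𝓞 F) e → LinearIndependent (𝓞 F) e' →
      (∀ i σ, nrm σ (e i) ≤ Real.exp μ) → (∀ i σ, nrm' σ (e' i) ≤ Real.exp ν) → 0 ≤ μ + ν) :
    0 ≤ sucMin F E nrm j + sucMin F E' nrm' j' := by
  obtain ⟨e, he⟩ := he
  obtain ⟨e', he'⟩ := he'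
  exact zero_le_csInf_add_csInf (nonempty_sucMin_set he) (nonempty_sucMin_set he')
    fun μ ⟨e, he, hμ⟩ ν ⟨e', he', hν⟩ ↦ h e e' μ ν he he' hμ hν

end SuccessiveMinima

theorem sucMin_add_dual_nonneg_general (F : Type*) [Field F] [NumberField F] (N k : ℕ)
    (hk1 : 1 ≤ k) (hkN : k ≤ N)
    (E : Type*) [AddCommGroup E] [Module (𝓞 F) E]
    [Module.Finite (𝓞 F) E] [Module.Projective (𝓞 F) E]
    (hN : Module.finrank (𝓞 F) E = N)
    (V : (F →+* ℂ) → Type*) [∀ σ, NormedAddCommGroup (V σ)]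
    [∀ σ, InnerProductSpace ℂ (V σ)]
    (ι : ∀ σ, E →+ V σ)
    (ιD : ∀ σ, Module.Dual (𝓞 F) E →+ (V σ →L[ℂ] ℂ))
    (hιD : ∀ σ (u : Module.Dual (𝓞 F) E) (x : E),
      ιD σ u (ι σ x) = σ (algebraMap (𝓞 F) F (u x))) :
    0 ≤ sucMin F E (fun σ x => ‖ι σ x‖) k
        + sucMin F (Module.Dual (𝓞 F) E) (fun σ u => ‖ιD σ u‖) (N + 1 - k) := by
  have : FinitePresentation (𝓞 F) E := finitePresentation_of_projective _ _
  refine zero_le_sucMin_add_sucMin (exists_linearIndependent_of_le_finrank (by omega))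
    (exists_linearIndependent_of_le_finrank (by rw [finrank_dual_of_isDomain]; omega)) ?_
  intro e u μ ν he hu heμ huν
  obtain ⟨i, j, hij⟩ := exists_dual_apply_ne_zero_of_finrank_lt_of_isDomain (by omega) he hu
  obtain ⟨σ, hσ⟩ := exists_conjugate_one_le_norm hij
  have hpair : ‖σ (u j (e i))‖ ≤ Real.exp (μ + ν) := by
    rw [← hιD, Real.exp_add, mul_comm]
    exact (ιD σ (u j)).le_of_opNorm_le_of_le (huν j σ) (heμ i σ)
  exact Real.one_le_exp_iff.mp (hσ.trans hpair)

/-- Let `Ē` be a hermitian vector bundle of rank `N` over `Spec 𝓞_F`: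
a finitely generated projective `𝓞 F`-module `E` together with, for each complex
embedding `σ`, a hermitian space `V σ` (of dimension `N`) in which `E` spans, via a
`σ`-semilinear map `ι σ`, with conjugation-invariant norms. The dual bundle `Ē*` is
`Hom_{𝓞 F}(E, 𝓞 F)` with the dual metrics, realized by `ιD σ` into the continuous
dual of `V σ` (so the dual norm is the operator norm). For every `k ≤ N`,
`0 ≤ μ_k(Ē) + μ_{N+1-k}(Ē*)`. -/
theorem sucMin_add_dual_nonneg (F : Type*) [Field F] [NumberField F] (N k : ℕ)
    (hk1 : 1 ≤ k) (hkN : k ≤ N)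
    (E : Type*) [AddCommGroup E] [Module (𝓞 F) E]
    [Module.Finite (𝓞 F) E] [Module.Projective (𝓞 F) E]
    (hN : Module.finrank (𝓞 F) E = N)
    (V : (F →+* ℂ) → Type*) [∀ σ, NormedAddCommGroup (V σ)]
    [∀ σ, InnerProductSpace ℂ (V σ)]
    (hdim : ∀ σ, Module.finrank ℂ (V σ) = N)
    (ι : ∀ σ, E →+ V σ)
    (hsemi : ∀ σ (c : 𝓞 F) (x : E),
      ι σ (c • x) = (σ (algebraMap (𝓞 F) F c)) • ι σ x)
    (hspan : ∀ σ, Submodule.span ℂ (Set.range (ι σ)) = ⊤)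
    (hconj : ∀ σ (x : E), ‖ι ((starRingEnd ℂ).comp σ) x‖ = ‖ι σ x‖)
    (ιD : ∀ σ, Module.Dual (𝓞 F) E →+ (V σ →L[ℂ] ℂ))
    (hιD : ∀ σ (u : Module.Dual (𝓞 F) E) (x : E),
      ιD σ u (ι σ x) = σ (algebraMap (𝓞 F) F (u x))) :
    0 ≤ sucMin F E (fun σ x => ‖ι σ x‖) k
        + sucMin F (Module.Dual (𝓞 F) E) (fun σ u => ‖ιD σ u‖) (N + 1 - k) :=
  sucMin_add_dual_nonneg_general F N k hk1 hkN E hN V ι ιD hιD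
end

section
/- Let L be a line bundle of degree δ on a smooth projective geometrically irreducible curve X_F of genus g over a field F, and D an effective divisor of degree d with d ≤ δ ≤ d + 2g − 2, δ even, δ ≥ 2g, and d ≥ 2g + 1. Set N = dim H^0(X_F, L) and t = dim H^0(X_F, L(−D)). Then N − t ≥ δ/2 + 1. -/
/-! The bundle `L` is nonspecial because `deg L > 2g - 2`, so `h⁰(L) = δ + 1 - g` by Riemann–Roch,
and it remains to show `2 h⁰(L(-D)) ≤ δ - 2g`. If `h⁰(L(-D)) ≠ 0`, Clifford's inequality holds for
`L(-D)`: directly when `L(-D)` is special, and by Riemann–Roch when it is nonspecial, since its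
degree `δ - d` is at most `2g`. With `d ≥ 2g + 1` this gives `2 h⁰(L(-D)) ≤ δ - 2g + 1`, and the
parity of `δ` removes the `+ 1`. -/

section Curve

variable {Pic : Type*} [AddCommGroup Pic] {deg : Pic →+ ℤ} {h0 h1 : Pic → ℕ} {g : ℤ} {K : Pic}

theorem h1_eq_zero_of_two_mul_sub_two_lt_deg (hK : deg K = 2 * g - 2)
    (serreDuality : ∀ M : Pic, h1 M = h0 (K - M))
    (h0_vanish : ∀ M : Pic, deg M < 0 → h0 M = 0) {M : Pic} (hM : 2 * g - 2 < deg M) :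
    h1 M = 0 := by
  rw [serreDuality]
  apply h0_vanish
  rw [map_sub, hK]
  linarith

theorem h0_eq_of_two_mul_sub_two_lt_deg (hK : deg K = 2 * g - 2)
    (riemannRoch : ∀ M : Pic, (h0 M : ℤ) - (h1 M : ℤ) = deg M + 1 - g)
    (serreDuality : ∀ M : Pic, h1 M = h0 (K - M))
    (h0_vanish : ∀ M : Pic, deg M < 0 → h0 M = 0) {M : Pic} (hM : 2 * g - 2 < deg M) :
    (h0 M : ℤ) = deg M + 1 - g := by
  have := riemannRoch M
  rw [h1_eq_zero_of_two_mul_sub_two_lt_deg hK serreDuality h0_vanish hM, Nat.cast_zero]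
    at this
  linarith

theorem clifford_of_deg_le_two_mul
    (riemannRoch : ∀ M : Pic, (h0 M : ℤ) - (h1 M : ℤ) = deg M + 1 - g)
    (serreDuality : ∀ M : Pic, h1 M = h0 (K - M))
    (clifford : ∀ M : Pic, h0 M ≠ 0 → h0 (K - M) ≠ 0 → 2 * ((h0 M : ℤ) - 1) ≤ deg M)
    {M : Pic} (hM0 : h0 M ≠ 0) (hM : deg M ≤ 2 * g) :
    2 * ((h0 M : ℤ) - 1) ≤ deg M := by
  by_cases hM1 : h1 M = 0
  · have := riemannRoch M
    rw [hM1, Nat.cast_zero] at this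
    linarith
  · exact clifford M hM0 (serreDuality M ▸ hM1)

end Curve

theorem h0_gap_ge_half_deg_general (Pic : Type*) [AddCommGroup Pic]
    (deg : Pic →+ ℤ) (h0 h1 : Pic → ℕ) (g : ℤ) (K : Pic)
    (hK : deg K = 2 * g - 2)
    (riemannRoch : ∀ M : Pic, (h0 M : ℤ) - (h1 M : ℤ) = deg M + 1 - g)
    (serreDuality : ∀ M : Pic, h1 M = h0 (K - M))
    (h0_vanish : ∀ M : Pic, deg M < 0 → h0 M = 0)
    (clifford : ∀ M : Pic, h0 M ≠ 0 → h0 (K - M) ≠ 0 →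
      2 * ((h0 M : ℤ) - 1) ≤ deg M)
    (L D : Pic) (δ d : ℤ) (hδ : deg L = δ) (hd : deg D = d)
    (h2 : δ ≤ d + 2 * g - 2) (heven : Even δ)
    (h3 : 2 * g ≤ δ) (h4 : 2 * g + 1 ≤ d) :
    δ + 2 ≤ 2 * ((h0 L : ℤ) - (h0 (L - D) : ℤ)) := by
  have hN : (h0 L : ℤ) = δ + 1 - g := by
    rw [h0_eq_of_two_mul_sub_two_lt_deg hK riemannRoch serreDuality h0_vanish (by omega), hδ]
  have hdeg : deg (L - D) = δ - d := by rw [map_sub, hδ, hd]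
  have ht : 2 * (h0 (L - D) : ℤ) ≤ δ - 2 * g := by
    by_cases ht0 : h0 (L - D) = 0
    · rw [ht0]
      omega
    · have hcliff := clifford_of_deg_le_two_mul riemannRoch serreDuality clifford ht0 (by omega)
      obtain ⟨k, rfl⟩ := heven
      omega
  omega

/-- On a smooth projective geometrically irreducible curve of genus `g`
(abstracted via its Picard group together with Riemann–Roch, Serre duality, `H⁰`
vanishing in negative degree and Clifford's theorem), let `L` have degree `δ` and `D`
be effective of degree `d` with `d ≤ δ ≤ d + 2g − 2`, `δ` even, `δ ≥ 2g`, `d ≥ 2g+1`.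
With `N = h⁰(L)` and `t = h⁰(L(−D))`, one has `N − t ≥ δ/2 + 1`. -/
theorem h0_gap_ge_half_deg (Pic : Type*) [AddCommGroup Pic]
    (deg : Pic →+ ℤ) (h0 h1 : Pic → ℕ) (g : ℤ) (hg : 0 ≤ g) (K : Pic)
    (hK : deg K = 2 * g - 2)
    (riemannRoch : ∀ M : Pic, (h0 M : ℤ) - (h1 M : ℤ) = deg M + 1 - g)
    (serreDuality : ∀ M : Pic, h1 M = h0 (K - M))
    (h0_vanish : ∀ M : Pic, deg M < 0 → h0 M = 0)
    (clifford : ∀ M : Pic, h0 M ≠ 0 → h0 (K - M) ≠ 0 →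
      2 * ((h0 M : ℤ) - 1) ≤ deg M)
    (L D : Pic) (δ d : ℤ) (hδ : deg L = δ) (hd : deg D = d)
    (h1' : d ≤ δ) (h2 : δ ≤ d + 2 * g - 2) (heven : Even δ)
    (h3 : 2 * g ≤ δ) (h4 : 2 * g + 1 ≤ d) :
    δ + 2 ≤ 2 * ((h0 L : ℤ) - (h0 (L - D) : ℤ)) :=
  h0_gap_ge_half_deg_general Pic deg h0 h1 g K hK riemannRoch serreDuality h0_vanish clifford L D δ
    d hδ hd h2 heven h3 h4
end
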